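/- With X*, Q*, gap_{ℓ,j}, δ_ℓ, n_ℓ as defined, for every even ℓ > 2: ∑_{j=0}^{n_ℓ−1} gap_{ℓ,j} ≥ δ_ℓ·ln(n_ℓ)/2. -/

import Mathlib

/-!
Write `c_j = cos(jθ_ℓ)` and `s_j = sin(jθ_ℓ)`. Every allocation available before `(ℓ, j)`
(zero, an allocation of an earlier layer, or `q_{ℓ,k}` with `k < j`) is worth at most
`c_j (z_ℓ − δ_ℓ) + s_j` at `x_{ℓ,j}`. Hence
`gap_{ℓ,j} ≥ δ_ℓ (c_j − s_j cot((j+1)θ_ℓ)) = δ_ℓ sin θ_ℓ / sin((j+1)θ_ℓ) ≥ δ_ℓ / (j+1)`,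
the last step by `|sin(nx)| ≤ n |sin x|`, while the last gap of the layer is nonnegative.
Summing, the gaps of layer `ℓ` add up to at least `δ_ℓ H_{n_ℓ−1} ≥ δ_ℓ ln n_ℓ`.
-/

open scoped BigOperators ENNReal NNReal

noncomputable section

namespace Stmt15

/-- Valuation / allocation vectors over 2 items. -/
abbrev V2 := Fin 2 → ℝ

/-- Dot product. -/
def dot (x y : V2) : ℝ := ∑ t, x t * y t

/-- ℓ¹ norm. -/
def norm1 (x : V2) : ℝ := ∑ t, |x t|

/-- `n_ℓ := ℓ·⌈(ln ℓ)²⌉ + 1`. -/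
def nl (l : ℕ) : ℕ := l * ⌈(Real.log l) ^ 2⌉₊ + 1

/-- `θ_ℓ := π / (2(n_ℓ − 1))`. -/
def θ (l : ℕ) : ℝ := Real.pi / (2 * ((nl l : ℝ) - 1))

/-- `α := ∑_{m=2}^∞ 1/(m (ln m)²)`. -/
def α : ℝ := ∑' m : ℕ, if 2 ≤ m then 1 / (m * (Real.log m) ^ 2) else 0

/-- `δ_ℓ := 1/(α ℓ (ln ℓ)²)`. -/
def δ (l : ℕ) : ℝ := 1 / (α * l * (Real.log l) ^ 2)

/-- `cot x := cos x / sin x`. -/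
def cot (x : ℝ) : ℝ := Real.cos x / Real.sin x

/-- `z_ℓ := ∑_{m=2}^ℓ δ_m`. -/
def zl (l : ℕ) : ℝ := ∑ m ∈ Finset.Icc 2 l, δ m

/-- `z_{ℓ,j} := 1 − δ_ℓ·cot((j+1)θ_ℓ)` for `j ≤ n_ℓ − 2`, and `z_{ℓ,n_ℓ−1} := 1`. -/
def zlj (l j : ℕ) : ℝ :=
  if j = nl l - 1 then 1 else 1 - δ l * cot (((j : ℝ) + 1) * θ l)

/-- The point `x_{ℓ,j}` of the layered construction. -/
def xstar (p : ℕ × ℕ) : V2 :=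
  if Even p.1 then ![Real.cos (p.2 * θ p.1), Real.sin (p.2 * θ p.1)]
  else ![Real.sin (p.2 * θ p.1), Real.cos (p.2 * θ p.1)]

/-- Valid (layer, position) indices: `ℓ ≥ 2`, `0 ≤ j ≤ n_ℓ − 1`. -/
def validIdx (p : ℕ × ℕ) : Prop := 2 ≤ p.1 ∧ p.2 < nl p.1

/-- Lexicographic order on indices: `(ℓ',j')` comes before `(ℓ,j)`. -/
def lexBefore (p q : ℕ × ℕ) : Prop := p.1 < q.1 ∨ (p.1 = q.1 ∧ p.2 < q.2)

/-- `Q` is the allocation sequence `Q*`: on even layers `q_{ℓ,j} = (z_ℓ, z_{ℓ,j})`;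
on odd layers `q_{ℓ,j}` is a vector among `q_0 = (0,0)` and `{q_{ℓ',j'} : ℓ' < ℓ}`
maximizing `x_{ℓ,j}·q`. -/
def isQstar (Q : ℕ × ℕ → V2) : Prop :=
  (∀ p : ℕ × ℕ, validIdx p → Even p.1 → Q p = ![zl p.1, zlj p.1 p.2]) ∧
  (∀ p : ℕ × ℕ, validIdx p → ¬ Even p.1 →
    (Q p = 0 ∨ ∃ p', validIdx p' ∧ p'.1 < p.1 ∧ Q p = Q p') ∧
    (∀ p', validIdx p' → p'.1 < p.1 → dot (xstar p) (Q p') ≤ dot (xstar p) (Q p)) ∧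
    0 ≤ dot (xstar p) (Q p))

/-- `gap_{ℓ,j} := x_{ℓ,j}·q_{ℓ,j} − max_{q} x_{ℓ,j}·q`, the maximum over `q_0 = (0,0)`
and all `q_{ℓ',j'}` with `(ℓ',j')` lexicographically before `(ℓ,j)`. -/
def gapStar (Q : ℕ × ℕ → V2) (p : ℕ × ℕ) : ℝ :=
  dot (xstar p) (Q p) -
    sSup (insert (0 : ℝ)
      {y | ∃ p', validIdx p' ∧ lexBefore p' p ∧ y = dot (xstar p) (Q p')})

lemma abs_sin_nat_mul_le (n : ℕ) (x : ℝ) : |Real.sin (n * x)| ≤ n * |Real.sin x| := by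
  induction n with
  | zero => simp
  | succ n ih =>
    calc |Real.sin ((n + 1 : ℕ) * x)|
        = |Real.sin (n * x) * Real.cos x + Real.cos (n * x) * Real.sin x| := by
          push_cast; rw [add_mul, one_mul, Real.sin_add]
      _ ≤ |Real.sin (n * x)| + |Real.sin x| := by
          refine (abs_add_le _ _).trans (add_le_add ?_ ?_) <;> rw [abs_mul]
          · exact mul_le_of_le_one_right (abs_nonneg _) (Real.abs_cos_le_one _)
          · exact mul_le_of_le_one_left (abs_nonneg _) (Real.abs_cos_le_one _)
      _ ≤ (n + 1 : ℕ) * |Real.sin x| := by push_cast; linarith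

lemma inv_le_sin_div_sin_succ_mul (n : ℕ) {x : ℝ} (hx : 0 ≤ Real.sin x)
    (hnx : 0 < Real.sin ((n + 1) * x)) :
    ((n : ℝ) + 1)⁻¹ ≤ Real.sin x / Real.sin ((n + 1) * x) := by
  have h := (le_abs_self _).trans (abs_sin_nat_mul_le (n + 1) x)
  push_cast at h
  rw [abs_of_nonneg hx] at h
  rw [inv_eq_one_div, div_le_div_iff₀ (by positivity) hnx]
  linarith

lemma cot_nonneg {x : ℝ} (h0 : 0 ≤ x) (h : x ≤ Real.pi / 2) : 0 ≤ cot x :=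
  div_nonneg (Real.cos_nonneg_of_mem_Icc ⟨by linarith [Real.pi_pos], h⟩)
    (Real.sin_nonneg_of_nonneg_of_le_pi h0 (by linarith [Real.pi_pos]))

lemma cos_le_sin_mul_cot {u x : ℝ} (hu : 0 < u) (hux : u ≤ x) (hx : x < Real.pi) :
    Real.cos x ≤ Real.sin x * cot u := by
  have hsin_u : 0 < Real.sin u := Real.sin_pos_of_pos_of_lt_pi hu (by linarith)
  have hsin_sub : 0 ≤ Real.sin (x - u) :=
    Real.sin_nonneg_of_nonneg_of_le_pi (by linarith) (by linarith)
  rw [cot, mul_div_assoc', le_div_iff₀ hsin_u]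
  rw [Real.sin_sub] at hsin_sub
  linarith

lemma cos_sub_sin_mul_cot_add {x y : ℝ} (h : Real.sin (x + y) ≠ 0) :
    Real.cos x - Real.sin x * cot (x + y) = Real.sin y / Real.sin (x + y) := by
  have hy : Real.sin y = Real.sin ((x + y) - x) := by ring_nf
  rw [hy, Real.sin_sub, cot, eq_div_iff h]
  field_simp

lemma α_nonneg : 0 ≤ α :=
  tsum_nonneg fun m => by split_ifs <;> positivity

lemma δ_nonneg (l : ℕ) : 0 ≤ δ l := by
  have := α_nonneg
  unfold δ
  positivity

lemma δ_le_zl {l : ℕ} (hl : 2 ≤ l) : δ l ≤ zl l :=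
  Finset.single_le_sum (fun m _ => δ_nonneg m) (Finset.mem_Icc.2 ⟨hl, le_rfl⟩)

lemma zl_add_δ_le {m l : ℕ} (hml : m < l) (hl : 2 ≤ l) : zl m + δ l ≤ zl l := by
  obtain ⟨l, rfl⟩ : ∃ l', l = l' + 1 := ⟨l - 1, by omega⟩
  rw [zl, zl, Finset.sum_Icc_succ_top hl]
  gcongr ?_ + _
  exact Finset.sum_le_sum_of_subset_of_nonneg (Finset.Icc_subset_Icc_right (by omega))
    fun i _ _ => δ_nonneg i

lemma one_lt_nl {l : ℕ} (hl : 2 ≤ l) : 1 < nl l := by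
  have hlog : 0 < Real.log l := Real.log_pos (by exact_mod_cast hl)
  have hceil : 0 < ⌈Real.log l ^ 2⌉₊ := Nat.ceil_pos.2 (by positivity)
  have := Nat.mul_pos (by omega : 0 < l) hceil
  unfold nl
  omega

lemma θ_pos {l : ℕ} (hl : 2 ≤ l) : 0 < θ l := by
  have : (1 : ℝ) < nl l := by exact_mod_cast one_lt_nl hl
  unfold θ
  exact div_pos Real.pi_pos (by linarith)

lemma nl_sub_one_mul_θ {l : ℕ} (hl : 2 ≤ l) : ((nl l : ℝ) - 1) * θ l = Real.pi / 2 := by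
  have : (nl l : ℝ) - 1 ≠ 0 := by
    have : (1 : ℝ) < nl l := by exact_mod_cast one_lt_nl hl
    linarith
  unfold θ
  field_simp

lemma natCast_mul_θ_le {l j : ℕ} (hl : 2 ≤ l) (hj : j < nl l) :
    (j : ℝ) * θ l ≤ Real.pi / 2 := by
  have : (j : ℝ) + 1 ≤ nl l := by exact_mod_cast hj
  rw [← nl_sub_one_mul_θ hl]
  exact mul_le_mul_of_nonneg_right (by linarith) (θ_pos hl).le

lemma cos_natCast_mul_θ_nonneg {l j : ℕ} (hl : 2 ≤ l) (hj : j < nl l) :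
    0 ≤ Real.cos (j * θ l) :=
  Real.cos_nonneg_of_mem_Icc
    ⟨by linarith [Real.pi_pos, mul_nonneg j.cast_nonneg (θ_pos hl).le], natCast_mul_θ_le hl hj⟩

lemma sin_natCast_mul_θ_nonneg {l j : ℕ} (hl : 2 ≤ l) (hj : j < nl l) :
    0 ≤ Real.sin (j * θ l) :=
  Real.sin_nonneg_of_nonneg_of_le_pi (mul_nonneg j.cast_nonneg (θ_pos hl).le)
    (by linarith [Real.pi_pos, natCast_mul_θ_le hl hj])

lemma zlj_of_succ_lt {m k : ℕ} (hk : k + 1 < nl m) :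
    zlj m k = 1 - δ m * cot (((k : ℝ) + 1) * θ m) :=
  if_neg (by omega)

lemma zlj_le_one {m k : ℕ} (hm : 2 ≤ m) (hk : k < nl m) : zlj m k ≤ 1 := by
  by_cases hlast : k = nl m - 1
  · rw [zlj, if_pos hlast]
  · have hcot : 0 ≤ cot (((k : ℝ) + 1) * θ m) :=
      cot_nonneg (by have := θ_pos hm; positivity)
        (by exact_mod_cast natCast_mul_θ_le (j := k + 1) hm (by omega))
    rw [zlj_of_succ_lt (by omega)]
    nlinarith [δ_nonneg m]

lemma dot_zero (x : V2) : dot x 0 = 0 := by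
  simp [dot]

lemma dot_xstar_of_even {l : ℕ} (hl : Even l) (j : ℕ) (a b : ℝ) :
    dot (xstar (l, j)) ![a, b] = Real.cos (j * θ l) * a + Real.sin (j * θ l) * b := by
  simp [xstar, hl, dot, Fin.sum_univ_two]

lemma le_gapStar_of_forall_le {Q : ℕ × ℕ → V2} {p : ℕ × ℕ} {b : ℝ} (hb : 0 ≤ b)
    (h : ∀ p', validIdx p' → lexBefore p' p → dot (xstar p) (Q p') ≤ b) :
    dot (xstar p) (Q p) - b ≤ gapStar Q p := by
  refine sub_le_sub_left (Real.sSup_le ?_ hb) _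
  rintro y (rfl | ⟨p', hp', hlex, rfl⟩)
  exacts [hb, h p' hp' hlex]

lemma isQstar.eq_zero_or_eq_of_layer_le {Q : ℕ × ℕ → V2} (hQ : isQstar Q) {p : ℕ × ℕ}
    (hp : validIdx p) :
    Q p = 0 ∨ ∃ m k, 2 ≤ m ∧ m ≤ p.1 ∧ k < nl m ∧ Q p = ![zl m, zlj m k] := by
  obtain ⟨l, j⟩ := p
  induction l using Nat.strong_induction_on generalizing j with
  | _ l ih =>
    by_cases he : Even l
    · exact Or.inr ⟨l, j, hp.1, le_rfl, hp.2, hQ.1 _ hp he⟩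
    obtain ⟨h | ⟨p', hp', hlt, heq⟩, -, -⟩ := hQ.2 _ hp he
    · exact Or.inl h
    rcases ih p'.1 hlt p'.2 hp' with h | ⟨m, k, hm, hmp, hk, hQp⟩
    · exact Or.inl (heq.trans h)
    · exact Or.inr ⟨m, k, hm, hmp.trans hlt.le, hk, heq.trans hQp⟩

/-- Earlier layers lie below the point `(z_ℓ − δ_ℓ, 1)`, and within layer `ℓ` the slopes
`cot((k+1)θ_ℓ)` decrease in `k`. -/
lemma isQstar.dot_le_of_lexBefore {Q : ℕ × ℕ → V2} (hQ : isQstar Q) {l j : ℕ} (hl : 2 ≤ l)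
    (he : Even l) (hj : j < nl l) {p : ℕ × ℕ} (hp : validIdx p) (hlex : lexBefore p (l, j)) :
    dot (xstar (l, j)) (Q p) ≤ dot (xstar (l, j)) ![zl l - δ l, 1] := by
  have hθ := θ_pos hl
  have hc := cos_natCast_mul_θ_nonneg hl hj
  have hs := sin_natCast_mul_θ_nonneg hl hj
  have hzl : 0 ≤ zl l - δ l := sub_nonneg.2 (δ_le_zl hl)
  rw [dot_xstar_of_even he]
  rcases hlex with hlt | ⟨heq, hkj⟩
  · rcases hQ.eq_zero_or_eq_of_layer_le hp with h0 | ⟨m, k, hm, hmp, hk, hQp⟩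
    · rw [h0, dot_zero]
      positivity
    · have hzm : zl m ≤ zl l - δ l := by linarith [zl_add_δ_le (hmp.trans_lt hlt) hl]
      rw [hQp, dot_xstar_of_even he]
      exact add_le_add (mul_le_mul_of_nonneg_left hzm hc)
        (mul_le_mul_of_nonneg_left (zlj_le_one hm hk) hs)
  · obtain ⟨l', k⟩ := p
    dsimp only at heq hkj
    subst l'
    have hcot : Real.cos (j * θ l) ≤ Real.sin (j * θ l) * cot (((k : ℝ) + 1) * θ l) :=
      cos_le_sin_mul_cot (by positivity)
        (mul_le_mul_of_nonneg_right (by exact_mod_cast hkj) hθ.le)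
        (by linarith [Real.pi_pos, natCast_mul_θ_le hl hj])
    rw [hQ.1 _ hp he]
    dsimp only
    rw [dot_xstar_of_even he, zlj_of_succ_lt (by omega)]
    nlinarith [δ_nonneg l]

lemma isQstar.le_gapStar {Q : ℕ × ℕ → V2} (hQ : isQstar Q) {l j : ℕ} (hl : 2 ≤ l)
    (he : Even l) (hj : j < nl l) :
    δ l * Real.cos (j * θ l) - Real.sin (j * θ l) * (1 - zlj l j) ≤ gapStar Q (l, j) := by
  have hb : 0 ≤ dot (xstar (l, j)) ![zl l - δ l, 1] := by
    have := sub_nonneg.2 (δ_le_zl hl)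
    have := cos_natCast_mul_θ_nonneg hl hj
    have := sin_natCast_mul_θ_nonneg hl hj
    rw [dot_xstar_of_even he]
    positivity
  have h := le_gapStar_of_forall_le hb fun p hp hlex => hQ.dot_le_of_lexBefore hl he hj hp hlex
  rw [hQ.1 (l, j) ⟨hl, hj⟩ he, dot_xstar_of_even he, dot_xstar_of_even he] at h
  linarith

lemma isQstar.δ_div_succ_le_gapStar {Q : ℕ × ℕ → V2} (hQ : isQstar Q) {l j : ℕ}
    (hl : 2 ≤ l) (he : Even l) (hj : j + 1 < nl l) :
    δ l / ((j : ℝ) + 1) ≤ gapStar Q (l, j) := by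
  have hθ := θ_pos hl
  have hφ : ((j : ℝ) + 1) * θ l ≤ Real.pi / 2 := by exact_mod_cast natCast_mul_θ_le hl hj
  have hθφ : θ l ≤ ((j : ℝ) + 1) * θ l :=
    le_mul_of_one_le_left hθ.le (by linarith [(j.cast_nonneg : (0 : ℝ) ≤ j)])
  have hsin : 0 < Real.sin (((j : ℝ) + 1) * θ l) :=
    Real.sin_pos_of_pos_of_lt_pi (by positivity) (by linarith [Real.pi_pos])
  have hratio := inv_le_sin_div_sin_succ_mul j
    (Real.sin_nonneg_of_nonneg_of_le_pi hθ.le (by linarith [Real.pi_pos])) hsin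
  have hadd : (j : ℝ) * θ l + θ l = ((j : ℝ) + 1) * θ l := by ring
  have hcot := cos_sub_sin_mul_cot_add (x := j * θ l) (y := θ l) (hadd ▸ hsin.ne')
  rw [hadd] at hcot
  calc δ l / ((j : ℝ) + 1) ≤ δ l * (Real.sin (θ l) / Real.sin (((j : ℝ) + 1) * θ l)) := by
        rw [div_eq_mul_inv]
        exact mul_le_mul_of_nonneg_left hratio (δ_nonneg l)
    _ = δ l * Real.cos (j * θ l) - Real.sin (j * θ l) * (1 - zlj l j) := by
        rw [zlj_of_succ_lt hj, ← hcot]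
        ring
    _ ≤ gapStar Q (l, j) := hQ.le_gapStar hl he (by omega)

lemma isQstar.gapStar_last_nonneg {Q : ℕ × ℕ → V2} (hQ : isQstar Q) {l : ℕ} (hl : 2 ≤ l)
    (he : Even l) : 0 ≤ gapStar Q (l, nl l - 1) := by
  have h := hQ.le_gapStar hl he (j := nl l - 1) (by have := one_lt_nl hl; omega)
  have hφ : ((nl l - 1 : ℕ) : ℝ) * θ l = Real.pi / 2 := by
    rw [Nat.cast_sub (one_lt_nl hl).le, Nat.cast_one, nl_sub_one_mul_θ hl]
  rwa [hφ, Real.cos_pi_div_two, zlj, if_pos rfl, sub_self, mul_zero, mul_zero, sub_zero] at h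

lemma log_succ_le_sum_inv (n : ℕ) :
    Real.log (n + 1) ≤ ∑ j ∈ Finset.range n, ((j : ℝ) + 1)⁻¹ := by
  have h := log_add_one_le_harmonic n
  push_cast [harmonic] at h
  exact h

theorem stmt15 (Q : ℕ × ℕ → V2) (hQ : isQstar Q) (l : ℕ)
    (hl : 2 < l) (hleven : Even l) :
    δ l * Real.log (nl l) / 2 ≤ ∑ j ∈ Finset.range (nl l), gapStar Q (l, j) := by
  obtain ⟨n, hn⟩ : ∃ n, nl l = n + 1 := ⟨nl l - 1, by have := one_lt_nl hl.le; omega⟩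
  have hlog : 0 ≤ δ l * Real.log (nl l) :=
    mul_nonneg (δ_nonneg l) (Real.log_nonneg (Nat.one_le_cast.2 (by omega)))
  calc δ l * Real.log (nl l) / 2 ≤ δ l * Real.log (nl l) := half_le_self hlog
    _ ≤ δ l * ∑ j ∈ Finset.range n, ((j : ℝ) + 1)⁻¹ := by
        rw [hn, Nat.cast_succ]
        exact mul_le_mul_of_nonneg_left (log_succ_le_sum_inv n) (δ_nonneg l)
    _ = ∑ j ∈ Finset.range n, δ l / ((j : ℝ) + 1) := by
        simp only [Finset.mul_sum, div_eq_mul_inv]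
    _ ≤ ∑ j ∈ Finset.range n, gapStar Q (l, j) :=
        Finset.sum_le_sum fun j hj =>
          hQ.δ_div_succ_le_gapStar hl.le hleven (by rw [Finset.mem_range] at hj; omega)
    _ ≤ ∑ j ∈ Finset.range (nl l), gapStar Q (l, j) := by
        rw [hn, Finset.sum_range_succ, le_add_iff_nonneg_right]
        simpa [hn] using hQ.gapStar_last_nonneg hl.le hleven

end Stmt15
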